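/- (Ring Lemma for univalent flowers) Let v be a vertex with exactly k ≥ 3 neighbors in a circle packing whose flower at v is univalent (the k+1 circles have mutually disjoint interiors, circle C_v is surrounded by the chain of k neighbor circles). Then there is a constant R(k) > 0 depending only on k such that r_w / r_v ≥ R(k) for every neighbor w of v. Moreover R(k+1) < R(k) ≤ 1. -/

import Mathlib

/-!
Write `u_i = ρ_i / (r_v + ρ_i)` for the sine of half the angle under which the `i`-th petal is
seen from the centre `z`. Two petals with disjoint interiors are seen from `z` under an angle at
least `arccos (1 - 2 u_i u_j) ≥ 2 min u_i u_j`, with equality in the first step for tangent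
neighbours, and a tangent pair containing a petal with `u ≤ s` is seen under an angle at most
`π √s`. So if `u ≤ s² / 4k²` on a block of consecutive petals, the triangle inequality along
the block shows that the two petals flanking it are seen under an angle at most `2 s`, hence
one of them has `u ≤ s`: a small petal forces a longer block of small petals, at the cost of a
square root in the bound. After `k - 2` steps all petals but one have `u ≤ 1 / k²`, so every
angle of the flower is at most `π / k`, and the angles cannot add up to `2π`.
-/

open Real

/-- Inner angle at the vertex of radius `a` in the triangle with side lengths
`a+b, a+c, b+c` formed by three mutually externally tangent circles. -/
noncomputable def ang (a b c : ℝ) : ℝ :=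
  Real.arccos (((a + b) ^ 2 + (a + c) ^ 2 - (b + c) ^ 2) / (2 * (a + b) * (a + c)))

open EuclideanGeometry Finset

lemma two_mul_sqrt_le_arccos_one_sub_two_mul {x : ℝ} (h0 : 0 ≤ x) (h1 : x ≤ 1) :
    2 * √x ≤ arccos (1 - 2 * x) := by
  have hs1 : √x ≤ 1 := sqrt_le_one.mpr h1
  calc 2 * √x = arccos (cos (2 * √x)) :=
        (arccos_cos (by positivity) (by nlinarith [pi_gt_three])).symm
    _ ≤ arccos (1 - 2 * x) := by
        apply arccos_le_arccos
        nlinarith [one_sub_sq_div_two_le_cos (x := 2 * √x), sq_sqrt h0]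

lemma arccos_one_sub_two_mul_le_pi_mul_sqrt {x : ℝ} (h0 : 0 ≤ x) (h1 : x ≤ 1) :
    arccos (1 - 2 * x) ≤ π * √x := by
  have hpix : π * √x ≤ π := mul_le_of_le_one_right pi_pos.le (sqrt_le_one.mpr h1)
  have hpix0 : 0 ≤ π * √x := by positivity
  calc arccos (1 - 2 * x) ≤ arccos (cos (π * √x)) := by
        apply arccos_le_arccos
        have hcos := cos_le_one_sub_mul_cos_sq (abs_le.2 ⟨by linarith [pi_pos], hpix⟩)
        rwa [mul_pow, sq_sqrt h0, ← mul_assoc, div_mul_cancel₀ _ (by positivity)] at hcos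
    _ = π * √x := arccos_cos hpix0 hpix

/-- The sine of half the angle under which a circle of radius `b` is seen from a point at
distance `a + b` from its centre. -/
noncomputable def halfAngleSin (a b : ℝ) : ℝ := b / (a + b)

lemma halfAngleSin_nonneg {a b : ℝ} (ha : 0 ≤ a) (hb : 0 ≤ b) : 0 ≤ halfAngleSin a b :=
  div_nonneg hb (add_nonneg ha hb)

lemma halfAngleSin_le_one {a b : ℝ} (ha : 0 ≤ a) (hb : 0 < b) : halfAngleSin a b ≤ 1 :=
  (div_le_one (by positivity)).2 (by linarith)

lemma halfAngleSin_le_div {a b : ℝ} (ha : 0 < a) (hb : 0 ≤ b) : halfAngleSin a b ≤ b / a :=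
  div_le_div_of_nonneg_left hb ha (by linarith)

lemma ang_comm (a b c : ℝ) : ang a b c = ang a c b := by
  unfold ang
  ring_nf

lemma ang_eq_arccos {a b c : ℝ} (hb : a + b ≠ 0) (hc : a + c ≠ 0) :
    ang a b c = arccos (1 - 2 * (halfAngleSin a b * halfAngleSin a c)) := by
  unfold ang halfAngleSin
  congr 1
  field_simp
  ring

section Radii

variable {a b c : ℝ} (ha : 0 < a) (hb : 0 < b) (hc : 0 < c)
include ha hb hc

lemma two_mul_min_le_ang :
    2 * min (halfAngleSin a b) (halfAngleSin a c) ≤ ang a b c := by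
  have hx := halfAngleSin_nonneg ha.le hb.le
  have hy := halfAngleSin_nonneg ha.le hc.le
  have hxy : halfAngleSin a b * halfAngleSin a c ≤ 1 :=
    mul_le_one₀ (halfAngleSin_le_one ha.le hb) hy (halfAngleSin_le_one ha.le hc)
  have hmin : min (halfAngleSin a b) (halfAngleSin a c) ≤
      √(halfAngleSin a b * halfAngleSin a c) := by
    rw [le_sqrt (le_min hx hy) (by positivity), sq]
    exact mul_le_mul (min_le_left _ _) (min_le_right _ _) (le_min hx hy) hx
  rw [ang_eq_arccos (by positivity) (by positivity)]
  linarith [two_mul_sqrt_le_arccos_one_sub_two_mul (by positivity) hxy]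

lemma ang_le_pi_mul_sqrt_left : ang a b c ≤ π * √(halfAngleSin a b) := by
  have hx := halfAngleSin_nonneg ha.le hb.le
  have hx1 := halfAngleSin_le_one ha.le hb
  rw [ang_eq_arccos (by positivity) (by positivity)]
  refine (arccos_le_arccos ?_).trans (arccos_one_sub_two_mul_le_pi_mul_sqrt hx hx1)
  nlinarith [mul_le_of_le_one_right hx (halfAngleSin_le_one ha.le hc)]

lemma ang_le_pi_mul_sqrt_right : ang a b c ≤ π * √(halfAngleSin a c) := by
  rw [ang_comm]
  exact ang_le_pi_mul_sqrt_left ha hc hb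

end Radii

/-- `√(ringThreshold k (m + 1)) = ringThreshold k m / 2k` is the loss of one step of the block
argument, and `ringThreshold k 0 = 1 / k²` makes every angle of the flower at most `π / k`. -/
noncomputable def ringThreshold (k : ℕ) : ℕ → ℝ
  | 0 => ((k : ℝ) ^ 2)⁻¹
  | m + 1 => ringThreshold k m ^ 2 / (4 * (k : ℝ) ^ 2)

/-- A lower bound for `ringThreshold k (k - 2)` that is strictly decreasing in `k`. -/
noncomputable def ringConstant (k : ℕ) : ℝ := (4 * (k : ℝ) ^ 2)⁻¹ ^ 2 ^ k

section Threshold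

variable {k : ℕ}

lemma ringThreshold_pos [NeZero k] (m : ℕ) : 0 < ringThreshold k m := by
  have : (0 : ℝ) < k := by exact_mod_cast Nat.pos_of_neZero k
  induction m with
  | zero => simp only [ringThreshold]; positivity
  | succ m ih => simp only [ringThreshold]; positivity

lemma ringThreshold_le_one [NeZero k] (m : ℕ) : ringThreshold k m ≤ 1 := by
  have hk : (1 : ℝ) ≤ k := by exact_mod_cast NeZero.one_le
  induction m with
  | zero => exact inv_le_one_of_one_le₀ (by nlinarith)
  | succ m ih =>
    rw [ringThreshold, div_le_one (by positivity)]
    nlinarith [ringThreshold_pos (k := k) m]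

lemma ringThreshold_succ_le [NeZero k] (m : ℕ) :
    ringThreshold k (m + 1) ≤ ringThreshold k m := by
  have hk : (1 : ℝ) ≤ k := by exact_mod_cast NeZero.one_le
  have h0 := ringThreshold_pos (k := k) m
  have h1 := ringThreshold_le_one (k := k) m
  rw [ringThreshold, div_le_iff₀ (by positivity)]
  nlinarith [mul_le_mul_of_nonneg_left h1 h0.le,
    mul_le_mul_of_nonneg_left (show (1 : ℝ) ≤ 4 * k ^ 2 by nlinarith) h0.le]

lemma inv_pow_le_ringThreshold [NeZero k] (m : ℕ) :
    (4 * (k : ℝ) ^ 2)⁻¹ ^ (2 ^ (m + 1) - 1) ≤ ringThreshold k m := by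
  have hk : (1 : ℝ) ≤ k := by exact_mod_cast NeZero.one_le
  induction m with
  | zero =>
    rw [show 2 ^ (0 + 1) - 1 = 1 from rfl, pow_one]
    exact inv_anti₀ (by positivity) (by nlinarith)
  | succ m ih =>
    have hexp : 2 ^ (m + 1 + 1) - 1 = (2 ^ (m + 1) - 1) * 2 + 1 := by
      have := Nat.one_le_two_pow (n := m + 1)
      rw [pow_succ]
      omega
    rw [hexp, pow_succ, pow_mul, ringThreshold, div_eq_mul_inv]
    gcongr

lemma ringConstant_pos (hk : k ≠ 0) : 0 < ringConstant k := by
  have : (0 : ℝ) < k := by exact_mod_cast Nat.pos_of_ne_zero hk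
  unfold ringConstant
  positivity

lemma ringConstant_le_one (k : ℕ) : ringConstant k ≤ 1 := by
  refine pow_le_one₀ (by positivity) ?_
  rcases Nat.eq_zero_or_pos k with rfl | hk
  · simp
  · have : (1 : ℝ) ≤ k := by exact_mod_cast hk
    exact inv_le_one_of_one_le₀ (by nlinarith)

lemma ringConstant_succ_lt (hk : k ≠ 0) : ringConstant (k + 1) < ringConstant k := by
  have hk1 : (1 : ℝ) ≤ k := by exact_mod_cast Nat.one_le_iff_ne_zero.2 hk
  unfold ringConstant
  push_cast
  calc (4 * ((k : ℝ) + 1) ^ 2)⁻¹ ^ 2 ^ (k + 1) < (4 * (k : ℝ) ^ 2)⁻¹ ^ 2 ^ (k + 1) := by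
        gcongr
        linarith
    _ ≤ (4 * (k : ℝ) ^ 2)⁻¹ ^ 2 ^ k :=
        pow_le_pow_of_le_one (by positivity) (inv_le_one_of_one_le₀ (by nlinarith))
          (Nat.pow_le_pow_right two_pos k.le_succ)

lemma ringConstant_le_ringThreshold [NeZero k] : ringConstant k ≤ ringThreshold k (k - 2) := by
  have hk1 : 1 ≤ k := NeZero.one_le
  have hk : (1 : ℝ) ≤ k := by exact_mod_cast hk1
  refine le_trans ?_ (inv_pow_le_ringThreshold (k - 2))
  exact pow_le_pow_of_le_one (by positivity) (inv_le_one_of_one_le₀ (by nlinarith))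
    ((Nat.sub_le _ _).trans (Nat.pow_le_pow_right two_pos (show k - 2 + 1 ≤ k by omega)))

end Threshold

lemma or_succ_of_forall_add_le_sub_two {k : ℕ} [NeZero k] {p : ZMod k → Prop} {i₀ : ZMod k}
    (h : ∀ t ≤ k - 2, p (i₀ + t)) (i : ZMod k) : p i ∨ p (i + 1) := by
  have hi : i = i₀ + ((i - i₀).val : ℕ) := by rw [ZMod.natCast_zmod_val]; ring
  have hlt := ZMod.val_lt (i - i₀)
  rcases (by omega : (i - i₀).val ≤ k - 2 ∨ (i - i₀).val = k - 1) with hle | heq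
  · left
    rw [hi]
    exact h _ hle
  · right
    have hi1 : i + 1 = i₀ + ((0 : ℕ) : ZMod k) := by
      rw [hi, heq, add_assoc, Nat.cast_sub NeZero.one_le]
      simp
    rw [hi1]
    exact h 0 (Nat.zero_le _)

section Euclidean

variable {V P : Type*} [NormedAddCommGroup V] [InnerProductSpace ℝ V] [MetricSpace P]
  [NormedAddTorsor V P]

lemma angle_eq_arccos_of_dist {p q z : P} (hp : p ≠ z) (hq : q ≠ z) :
    ∠ p z q =
      arccos ((dist p z ^ 2 + dist q z ^ 2 - dist p q ^ 2) / (2 * dist p z * dist q z)) := by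
  have hcos : (dist p z ^ 2 + dist q z ^ 2 - dist p q ^ 2) / (2 * dist p z * dist q z) =
      cos (∠ p z q) := by
    have hpz := dist_pos.2 hp
    have hqz := dist_pos.2 hq
    field_simp
    linear_combination -law_cos p z q
  rw [hcos, arccos_cos (angle_nonneg _ _ _) (angle_le_pi _ _ _)]

lemma angle_eq_ang {p q z : P} {a b c : ℝ} (hb : 0 < a + b) (hc : 0 < a + c)
    (hp : dist p z = a + b) (hq : dist q z = a + c) (hpq : dist p q = b + c) :
    ∠ p z q = ang a b c := by
  rw [angle_eq_arccos_of_dist (dist_pos.1 (hp ▸ hb)) (dist_pos.1 (hq ▸ hc)), hp, hq, hpq, ang]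

lemma ang_le_angle {p q z : P} {a b c : ℝ} (hb : 0 < a + b) (hc : 0 < a + c) (hbc : 0 ≤ b + c)
    (hp : dist p z = a + b) (hq : dist q z = a + c) (hpq : b + c ≤ dist p q) :
    ang a b c ≤ ∠ p z q := by
  rw [angle_eq_arccos_of_dist (dist_pos.1 (hp ▸ hb)) (dist_pos.1 (hq ▸ hc)), hp, hq, ang]
  exact arccos_le_arccos (div_le_div_of_nonneg_right (by nlinarith) (by positivity))

lemma angle_le_sum_angle {z : P} (p : ℕ → P) (hp : ∀ i, p i ≠ z) (n : ℕ) :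
    ∠ (p 0) z (p n) ≤ ∑ i ∈ range n, ∠ (p i) z (p (i + 1)) := by
  induction n with
  | zero => simp [angle_self_of_ne (hp 0)]
  | succ n ih =>
    rw [sum_range_succ]
    linarith [angle_le_angle_add_angle z (p 0) (p n) (p (n + 1))]

/-- `sum_ang` says that the closed chain of petals winds exactly once around `z`. -/
structure IsUnivalentFlower {k : ℕ} [NeZero k] (z : P) (rv : ℝ) (c : ZMod k → P)
    (ρ : ZMod k → ℝ) : Prop where
  rv_pos : 0 < rv
  radius_pos : ∀ i, 0 < ρ i
  dist_center : ∀ i, dist (c i) z = rv + ρ i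
  dist_succ : ∀ i, dist (c i) (c (i + 1)) = ρ i + ρ (i + 1)
  le_dist : ∀ i j, i ≠ j → ρ i + ρ j ≤ dist (c i) (c j)
  sum_ang : ∑ i, ang rv (ρ i) (ρ (i + 1)) = 2 * π

namespace IsUnivalentFlower

variable {k : ℕ} [NeZero k] {z : P} {rv : ℝ} {c : ZMod k → P} {ρ : ZMod k → ℝ}

lemma center_ne (hF : IsUnivalentFlower z rv c ρ) (i : ZMod k) : c i ≠ z := by
  rw [← dist_pos, hF.dist_center]
  linarith [hF.rv_pos, hF.radius_pos i]

lemma angle_succ (hF : IsUnivalentFlower z rv c ρ) (i : ZMod k) :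
    ∠ (c i) z (c (i + 1)) = ang rv (ρ i) (ρ (i + 1)) :=
  angle_eq_ang (by linarith [hF.rv_pos, hF.radius_pos i])
    (by linarith [hF.rv_pos, hF.radius_pos (i + 1)])
    (hF.dist_center _) (hF.dist_center _) (hF.dist_succ i)

lemma angle_succ_le (hF : IsUnivalentFlower z rv c ρ) {i : ZMod k} {s : ℝ}
    (hs : halfAngleSin rv (ρ i) ≤ s ∨ halfAngleSin rv (ρ (i + 1)) ≤ s) :
    ∠ (c i) z (c (i + 1)) ≤ π * √s := by
  have hr := hF.rv_pos
  have hi := hF.radius_pos i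
  have hi' := hF.radius_pos (i + 1)
  rw [hF.angle_succ]
  rcases hs with hs | hs
  · exact (ang_le_pi_mul_sqrt_left hr hi hi').trans (by gcongr)
  · exact (ang_le_pi_mul_sqrt_right hr hi hi').trans (by gcongr)

lemma two_mul_min_le_angle (hF : IsUnivalentFlower z rv c ρ) {i j : ZMod k} (hij : i ≠ j) :
    2 * min (halfAngleSin rv (ρ i)) (halfAngleSin rv (ρ j)) ≤ ∠ (c i) z (c j) := by
  have hr := hF.rv_pos
  have hi := hF.radius_pos i
  have hj := hF.radius_pos j
  exact (two_mul_min_le_ang hr hi hj).trans <| ang_le_angle (by linarith) (by linarith)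
    (by linarith) (hF.dist_center i) (hF.dist_center j) (hF.le_dist i j hij)

lemma angle_le_sum_angle_succ (hF : IsUnivalentFlower z rv c ρ) (a : ZMod k) (n : ℕ) :
    ∠ (c a) z (c (a + n)) ≤ ∑ t ∈ range n, ∠ (c (a + t)) z (c (a + t + 1)) := by
  simpa [add_assoc] using
    angle_le_sum_angle (fun t : ℕ ↦ c (a + t)) (fun t ↦ hF.center_ne _) n

include V in
lemma neighbor_le_of_block_le (hF : IsUnivalentFlower z rv c ρ) {i : ZMod k} {j : ℕ}
    (hj : j + 2 < k) {s : ℝ} (hs : 0 ≤ s)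
    (hblock : ∀ t ≤ j, halfAngleSin rv (ρ (i + t)) ≤ s ^ 2 / (4 * k ^ 2)) :
    halfAngleSin rv (ρ (i - 1)) ≤ s ∨ halfAngleSin rv (ρ (i + (j + 1 : ℕ))) ≤ s := by
  have hk : (0 : ℝ) < k := by exact_mod_cast Nat.pos_of_neZero k
  have hsqrt : √(s ^ 2 / (4 * k ^ 2)) = s / (2 * k) := by
    rw [show s ^ 2 / (4 * k ^ 2) = (s / (2 * k)) ^ 2 by ring]
    exact sqrt_sq (by positivity)
  have hstep : ∀ t ∈ range (j + 2),
      ∠ (c (i - 1 + t)) z (c (i - 1 + t + 1)) ≤ π * (s / (2 * k)) := by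
    intro t ht
    rw [← hsqrt]
    apply hF.angle_succ_le
    rcases t with _ | t
    · right
      simpa using hblock 0 (Nat.zero_le _)
    · left
      have := hblock t (by simp at ht; omega)
      rwa [show i - 1 + ((t + 1 : ℕ) : ZMod k) = i + t by push_cast; ring]
  have hne : i - 1 ≠ i - 1 + (j + 2 : ℕ) := by
    intro h
    have h0 : ((j + 2 : ℕ) : ZMod k) = 0 := by linear_combination -h
    rw [ZMod.natCast_eq_zero_iff] at h0
    exact absurd (Nat.le_of_dvd (by omega) h0) (by omega)
  have hjk : (j : ℝ) + 2 ≤ k := by exact_mod_cast hj.le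
  have hmin := calc
    2 * min (halfAngleSin rv (ρ (i - 1))) (halfAngleSin rv (ρ (i - 1 + (j + 2 : ℕ))))
      ≤ ∠ (c (i - 1)) z (c (i - 1 + (j + 2 : ℕ))) := hF.two_mul_min_le_angle hne
    _ ≤ ∑ t ∈ range (j + 2), ∠ (c (i - 1 + t)) z (c (i - 1 + t + 1)) :=
      hF.angle_le_sum_angle_succ _ _
    _ ≤ (j + 2) * (π * (s / (2 * k))) := by
      simpa using sum_le_card_nsmul _ _ _ hstep
    _ ≤ k * (4 * (s / (2 * k))) := by gcongr; exact pi_le_four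
    _ = 2 * s := by field_simp; ring
  rw [show i - 1 + ((j + 2 : ℕ) : ZMod k) = i + (j + 1 : ℕ) by push_cast; ring] at hmin
  exact min_le_iff.mp (by linarith)

include V in
lemma exists_block_le_ringThreshold (hF : IsUnivalentFlower z rv c ρ) {j : ℕ} (hj : j + 1 < k)
    (m : ℕ) {i : ZMod k} (hi : halfAngleSin rv (ρ i) ≤ ringThreshold k (m + j)) :
    ∃ i₀ : ZMod k, ∀ t ≤ j, halfAngleSin rv (ρ (i₀ + t)) ≤ ringThreshold k m := by
  induction j generalizing m with
  | zero => exact ⟨i, fun t ht => by simpa [Nat.le_zero.1 ht] using hi⟩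
  | succ j ih =>
    obtain ⟨i₀, hblock⟩ := ih (by omega) (m + 1) (by rwa [add_right_comm, add_assoc])
    rcases hF.neighbor_le_of_block_le (by omega) (ringThreshold_pos m).le hblock with h | h
    · refine ⟨i₀ - 1, fun t ht => ?_⟩
      rcases t with _ | t
      · simpa using h
      · rw [show i₀ - 1 + ((t + 1 : ℕ) : ZMod k) = i₀ + t by push_cast; ring]
        exact (hblock t (by omega)).trans (ringThreshold_succ_le m)
    · refine ⟨i₀, fun t ht => ?_⟩
      rcases (by omega : t ≤ j ∨ t = j + 1) with ht | rfl
      · exact (hblock t ht).trans (ringThreshold_succ_le m)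
      · exact h

include V in
lemma ringThreshold_lt_halfAngleSin (hF : IsUnivalentFlower z rv c ρ) (hk : 2 ≤ k) (i : ZMod k) :
    ringThreshold k (k - 2) < halfAngleSin rv (ρ i) := by
  by_contra! hi
  obtain ⟨i₀, hblock⟩ :=
    hF.exists_block_le_ringThreshold (j := k - 2) (by omega) 0 (by rwa [zero_add])
  have hk0 : (0 : ℝ) < k := by exact_mod_cast Nat.pos_of_neZero k
  have hstep : ∀ i', ∠ (c i') z (c (i' + 1)) ≤ π / k := by
    intro i'
    have h := hF.angle_succ_le (or_succ_of_forall_add_le_sub_two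
      (p := fun i ↦ halfAngleSin rv (ρ i) ≤ ringThreshold k 0) hblock i')
    rwa [ringThreshold, sqrt_inv, sqrt_sq hk0.le, ← div_eq_mul_inv] at h
  have : 2 * π ≤ π := calc
    2 * π = ∑ i', ∠ (c i') z (c (i' + 1)) := by simp only [hF.angle_succ, hF.sum_ang]
    _ ≤ k * (π / k) := by simpa using sum_le_card_nsmul univ _ _ fun i' _ ↦ hstep i'
    _ = π := by field_simp
  linarith [pi_pos]

end IsUnivalentFlower

end Euclidean

/-- Ring Lemma: there is `R : ℕ → ℝ` with `R(k+1) < R(k) ≤ 1`, `R(k) > 0`, such that for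
every univalent flower (a central circle of radius `rv` centered at `z`, surrounded by a
closed tangent chain of `k ≥ 3` circles with centers `c i` and radii `ρ i`, with pairwise
disjoint interiors, wrapping once around so the angles at `z` sum to `2π`), every petal
radius satisfies `ρ i / rv ≥ R k`. -/
theorem stmt_13 :
    ∃ R : ℕ → ℝ,
      (∀ k : ℕ, 3 ≤ k → 0 < R k ∧ R k ≤ 1) ∧
      (∀ k : ℕ, 3 ≤ k → R (k + 1) < R k) ∧
      (∀ (k : ℕ), 3 ≤ k → ∀ [NeZero k],
        ∀ (z : ℂ) (rv : ℝ) (c : ZMod k → ℂ) (ρ : ZMod k → ℝ),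
        0 < rv → (∀ i, 0 < ρ i) →
        (∀ i, dist (c i) z = rv + ρ i) →
        (∀ i : ZMod k, dist (c i) (c (i + 1)) = ρ i + ρ (i + 1)) →
        (∀ i j : ZMod k, i ≠ j → ρ i + ρ j ≤ dist (c i) (c j)) →
        (∑ i : ZMod k, ang rv (ρ i) (ρ (i + 1))) = 2 * Real.pi →
        ∀ i, R k ≤ ρ i / rv) := by
  refine ⟨ringConstant, fun k hk => ⟨ringConstant_pos (by omega), ringConstant_le_one k⟩,
    fun k hk => ringConstant_succ_lt (by omega), ?_⟩
  intro k hk _ z rv c ρ hrv hρ hdist hsucc hdisj hsum i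
  have hF : IsUnivalentFlower z rv c ρ := ⟨hrv, hρ, hdist, hsucc, hdisj, hsum⟩
  calc ringConstant k ≤ ringThreshold k (k - 2) := ringConstant_le_ringThreshold
    _ ≤ halfAngleSin rv (ρ i) := (hF.ringThreshold_lt_halfAngleSin (by omega) i).le
    _ ≤ ρ i / rv := halfAngleSin_le_div hrv (hρ i).le
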